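/- Information-relaxation lower bound. Let H_M be the operator on functions v : S × M → ℝ defined by (H_M v)(s, μ) = min_{a ∈ 𝒜 s} Σ_{y', μ'} Q μ y' μ' * ( c s y' a + β * Σ_{s'} p y' s a s' * v(s', μ') ); H_M is a β-contraction with unique fixed point v_M. Then for every s ∈ S and every b ∈ B: Σ_μ b μ * v_M(s, μ) ≤ v*(s, b). -/

import Mathlib

open Finset

/-- The belief simplex over the modulation space `M`. -/
abbrev Belief (M : Type) [Fintype M] : Type :=
  {b : M → ℝ // (∀ μ, 0 ≤ b μ) ∧ ∑ μ, b μ = 1}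

/-- A finite SEP-POMDP: feasible action sets, cost function, state transition
probabilities, modulation/observation probabilities, and a discount factor. -/
structure SEP (S Y M A : Type) [Fintype S] [Fintype Y] [Fintype M] [Fintype A] where
  act : S → Finset A
  act_ne : ∀ s, (act s).Nonempty
  c : S → Y → A → ℝ
  p : Y → S → A → S → ℝ
  p_nonneg : ∀ y' s a s', 0 ≤ p y' s a s'
  p_sum : ∀ y' s a, ∑ s', p y' s a s' = 1
  Q : M → Y → M → ℝ
  Q_nonneg : ∀ μ y' μ', 0 ≤ Q μ y' μ'
  Q_sum : ∀ μ, ∑ y', ∑ μ', Q μ y' μ' = 1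
  β : ℝ
  β_nonneg : 0 ≤ β
  β_lt_one : β < 1

namespace SEP

variable {S Y M A : Type} [Fintype S] [Fintype Y] [Fintype M] [Fintype A]

/-- `σ(y' | b) = ∑ μ, ∑ μ', b μ * Q μ y' μ'`. -/
def sig (P : SEP S Y M A) (b : Belief M) (y' : Y) : ℝ :=
  ∑ μ, ∑ μ', b.1 μ * P.Q μ y' μ'

/-- The Bayesian belief update `λ(y', b)`. -/
noncomputable def lam (P : SEP S Y M A) (y' : Y) (b : Belief M) : Belief M :=
  if h : 0 < P.sig b y' then
    ⟨fun μ' => (∑ μ, b.1 μ * P.Q μ y' μ') / P.sig b y',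
      fun μ' => div_nonneg (Finset.sum_nonneg fun μ _ =>
        mul_nonneg (b.2.1 μ) (P.Q_nonneg μ y' μ')) h.le,
      by
        rw [← Finset.sum_div, Finset.sum_comm]
        exact div_self (ne_of_gt h)⟩
  else b

/-- `h_{y'}(s, a, v̄) = c s y' a + β * ∑ s', p y' s a s' * v̄ s'`. -/
def hy (P : SEP S Y M A) (y' : Y) (s : S) (a : A) (vb : S → ℝ) : ℝ :=
  P.c s y' a + P.β * ∑ s', P.p y' s a s' * vb s'

/-- The Bellman operator `H` of the SEP-POMDP. -/
noncomputable def H (P : SEP S Y M A) (v : S → Belief M → ℝ) (s : S) (b : Belief M) : ℝ :=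
  (P.act s).inf' (P.act_ne s) fun a =>
    ∑ y', P.sig b y' * P.hy y' s a fun s' => v s' (P.lam y' b)

/-- Boundedness of a function `v : S × B → ℝ`. -/
def Bdd (v : S → Belief M → ℝ) : Prop :=
  ∃ C, ∀ s b, |v s b| ≤ C

end SEP

/-- The information-relaxation operator `H_M` on functions `S × M → ℝ`. -/
noncomputable def SEP.HM {S Y M A : Type} [Fintype S] [Fintype Y] [Fintype M] [Fintype A]
    (P : SEP S Y M A) (v : S → M → ℝ) (s : S) (μ : M) : ℝ :=
  (P.act s).inf' (P.act_ne s) fun a =>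
    ∑ y', ∑ μ', P.Q μ y' μ' * (P.c s y' a + P.β * ∑ s', P.p y' s a s' * v s' μ')

/-! The belief average `g s b = ∑ μ, b μ * vM s μ` is a subsolution, `g ≤ H g`: averaging the
minimum over actions is at most the minimum of the averages, and by Bayes' rule the prior-weighted
relaxed cost under observation `y'` is `σ(y' | b)` times the cost at the posterior `λ(y', b)`.
Since `H` is monotone and shifts constants by the factor `β < 1`, the gap `d = sup (g - v*)`
satisfies `d ≤ β d`, so `d ≤ 0`. -/

theorem le_of_le_map_of_map_eq {X : Type*} {T : (X → ℝ) → X → ℝ} {β : ℝ} (hβ : β < 1)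
    (hT : ∀ v w K, (∀ x, v x ≤ w x + K) → ∀ x, T v x ≤ T w x + β * K)
    {g w : X → ℝ} (hg : ∀ x, g x ≤ T g x) (hw : ∀ x, T w x = w x)
    (hbdd : BddAbove (Set.range fun x => g x - w x)) (x : X) : g x ≤ w x := by
  have : Nonempty X := ⟨x⟩
  set d := ⨆ x, g x - w x
  have hd : ∀ x, g x ≤ w x + d := fun x => by linarith [le_ciSup hbdd x]
  have hdβ : d ≤ β * d := ciSup_le fun x => by
    linarith [hg x, hT g w d hd x, hw x]
  have hd0 : d ≤ 0 := by nlinarith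
  linarith [hd x]

theorem sum_belief_mul_le {M : Type} [Fintype M] (b : Belief M) {f : M → ℝ} {C : ℝ}
    (hf : ∀ μ, f μ ≤ C) : ∑ μ, b.1 μ * f μ ≤ C :=
  calc ∑ μ, b.1 μ * f μ ≤ ∑ μ, b.1 μ * C :=
        sum_le_sum fun μ _ => mul_le_mul_of_nonneg_left (hf μ) (b.2.1 μ)
    _ = C := by rw [← sum_mul, b.2.2, one_mul]

namespace SEP

variable {S Y M A : Type} [Fintype S] [Fintype Y] [Fintype M] [Fintype A] (P : SEP S Y M A)

theorem sig_nonneg (b : Belief M) (y' : Y) : 0 ≤ P.sig b y' :=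
  sum_nonneg fun μ _ => sum_nonneg fun μ' _ => mul_nonneg (b.2.1 μ) (P.Q_nonneg μ y' μ')

theorem sum_sig (b : Belief M) : ∑ y', P.sig b y' = 1 := by
  simp only [sig, ← mul_sum]
  rw [sum_comm]
  simp only [← mul_sum, P.Q_sum, mul_one, b.2.2]

theorem sig_mul_lam (b : Belief M) (y' : Y) (μ' : M) :
    P.sig b y' * (P.lam y' b).1 μ' = ∑ μ, b.1 μ * P.Q μ y' μ' := by
  by_cases h : 0 < P.sig b y'
  · simp only [lam, dif_pos h]
    field_simp
  -- here `λ(y', b)` falls back to `b`, but every `b μ * Q μ y' μ'` vanishes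
  · have h0 : P.sig b y' = 0 := le_antisymm (not_lt.mp h) (P.sig_nonneg b y')
    have h0' : ∑ μ', ∑ μ, b.1 μ * P.Q μ y' μ' = 0 := by rwa [sum_comm]
    rw [h0, zero_mul, ((sum_eq_zero_iff_of_nonneg fun μ' _ => sum_nonneg fun μ _ =>
      mul_nonneg (b.2.1 μ) (P.Q_nonneg μ y' μ')).1 h0' μ' (mem_univ μ'))]

theorem hy_le_add {y' : Y} {s : S} {a : A} {v w : S → ℝ} {K : ℝ}
    (hvw : ∀ s', v s' ≤ w s' + K) : P.hy y' s a v ≤ P.hy y' s a w + P.β * K := by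
  have : ∑ s', P.p y' s a s' * v s' ≤ ∑ s', P.p y' s a s' * w s' + K :=
    calc ∑ s', P.p y' s a s' * v s' ≤ ∑ s', P.p y' s a s' * (w s' + K) :=
          sum_le_sum fun s' _ => mul_le_mul_of_nonneg_left (hvw s') (P.p_nonneg y' s a s')
      _ = ∑ s', P.p y' s a s' * w s' + K := by
          simp only [mul_add, sum_add_distrib, ← sum_mul, P.p_sum, one_mul]
  have := mul_le_mul_of_nonneg_left this P.β_nonneg
  unfold hy
  linarith

theorem H_le_add {v w : S → Belief M → ℝ} {K : ℝ} (hvw : ∀ s b, v s b ≤ w s b + K)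
    (s : S) (b : Belief M) : P.H v s b ≤ P.H w s b + P.β * K := by
  rw [← sub_le_iff_le_add]
  refine le_inf' _ _ fun a ha => ?_
  rw [sub_le_iff_le_add]
  calc P.H v s b ≤ ∑ y', P.sig b y' * P.hy y' s a (fun s' => v s' (P.lam y' b)) :=
        inf'_le _ ha
    _ ≤ ∑ y', P.sig b y' * (P.hy y' s a (fun s' => w s' (P.lam y' b)) + P.β * K) :=
        sum_le_sum fun y' _ => mul_le_mul_of_nonneg_left
          (P.hy_le_add fun s' => hvw s' _) (P.sig_nonneg b y')
    _ = ∑ y', P.sig b y' * P.hy y' s a (fun s' => w s' (P.lam y' b)) + P.β * K := by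
        simp only [mul_add, sum_add_distrib, ← sum_mul, P.sum_sig b, one_mul]

theorem sum_mul_sum_Q_mul (b : Belief M) (y' : Y) (F : M → ℝ) :
    ∑ μ, b.1 μ * ∑ μ', P.Q μ y' μ' * F μ' =
      P.sig b y' * ∑ μ', (P.lam y' b).1 μ' * F μ' := by
  simp only [mul_sum, ← mul_assoc, P.sig_mul_lam, sum_mul]
  exact sum_comm

theorem hy_sum_belief_mul (y' : Y) (s : S) (a : A) (b : Belief M) (v : S → M → ℝ) :
    P.hy y' s a (fun s' => ∑ μ, b.1 μ * v s' μ) =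
      ∑ μ, b.1 μ * P.hy y' s a (fun s' => v s' μ) := by
  simp only [hy, mul_add, sum_add_distrib, ← sum_mul, b.2.2, one_mul, mul_sum]
  exact congrArg _ (sum_comm.trans (sum_congr rfl fun _ _ => sum_congr rfl fun _ _ => by ring))

theorem sum_belief_mul_le_H {v : S → M → ℝ} (hv : ∀ s μ, v s μ ≤ P.HM v s μ)
    (s : S) (b : Belief M) :
    ∑ μ, b.1 μ * v s μ ≤ P.H (fun s b => ∑ μ, b.1 μ * v s μ) s b := by
  refine le_inf' _ _ fun a ha => ?_
  calc ∑ μ, b.1 μ * v s μ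
      ≤ ∑ μ, b.1 μ * ∑ y', ∑ μ', P.Q μ y' μ' * P.hy y' s a (fun s' => v s' μ') :=
        sum_le_sum fun μ _ => mul_le_mul_of_nonneg_left ((hv s μ).trans (inf'_le _ ha)) (b.2.1 μ)
    _ = ∑ y', ∑ μ, b.1 μ * ∑ μ', P.Q μ y' μ' * P.hy y' s a (fun s' => v s' μ') := by
        simp only [mul_sum]
        exact sum_comm
    _ = ∑ y', P.sig b y' * P.hy y' s a (fun s' => ∑ μ', (P.lam y' b).1 μ' * v s' μ') := by
        simp only [P.sum_mul_sum_Q_mul, P.hy_sum_belief_mul]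

end SEP

theorem information_relaxation_lower_bound_general
    {S Y M A : Type} [Fintype S] [Fintype Y] [Fintype M] [Fintype A]
    (P : SEP S Y M A)
    -- the unique fixed point of H_M
    (vM : S → M → ℝ) (hvM : ∀ s μ, vM s μ = P.HM vM s μ)
    -- the unique bounded fixed point of H
    (vstar : S → Belief M → ℝ) (hbdd : SEP.Bdd vstar)
    (hfix : ∀ s b, vstar s b = P.H vstar s b) :
    ∀ (s : S) (b : Belief M), ∑ μ, b.1 μ * vM s μ ≤ vstar s b := by
  intro s b
  have hgap : BddAbove
      (Set.range fun x : S × Belief M => ∑ μ, x.2.1 μ * vM x.1 μ - vstar x.1 x.2) := by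
    obtain ⟨C, hC⟩ := hbdd
    obtain ⟨D, hD⟩ := (Set.finite_range (Function.uncurry vM)).bddAbove
    refine ⟨D + C, ?_⟩
    rintro _ ⟨⟨s, b⟩, rfl⟩
    have hg : ∑ μ, b.1 μ * vM s μ ≤ D := sum_belief_mul_le b fun μ => hD ⟨(s, μ), rfl⟩
    linarith [(abs_le.1 (hC s b)).1]
  exact le_of_le_map_of_map_eq (T := fun v x => P.H (fun s b => v (s, b)) x.1 x.2)
    (g := fun x => ∑ μ, x.2.1 μ * vM x.1 μ) (w := fun x => vstar x.1 x.2) P.β_lt_one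
    (fun v w K hvw x => P.H_le_add (fun s b => hvw (s, b)) x.1 x.2)
    (fun x => P.sum_belief_mul_le_H (fun s μ => (hvM s μ).le) x.1 x.2)
    (fun x => (hfix x.1 x.2).symm) hgap (s, b)

/-- **Information-relaxation lower bound.** The fixed point `vM` of the
relaxed operator `H_M` gives a lower bound on the SEP-POMDP value function:
`∑ μ, b μ * vM s μ ≤ vstar s b` for all states `s` and beliefs `b`. -/
theorem information_relaxation_lower_bound
    {S Y M A : Type} [Fintype S] [Fintype Y] [Fintype M] [Fintype A]
    [Nonempty S] [Nonempty Y] [Nonempty M] [Nonempty A]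
    (P : SEP S Y M A)
    -- the unique fixed point of H_M
    (vM : S → M → ℝ) (hvM : ∀ s μ, vM s μ = P.HM vM s μ)
    -- the unique bounded fixed point of H
    (vstar : S → Belief M → ℝ) (hbdd : SEP.Bdd vstar)
    (hfix : ∀ s b, vstar s b = P.H vstar s b) :
    ∀ (s : S) (b : Belief M), ∑ μ, b.1 μ * vM s μ ≤ vstar s b :=
  information_relaxation_lower_bound_general P vM hvM vstar hbdd hfix
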